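/- arXiv:2006.02492 — 2 statements merged into one kernel-verified Lean document; each statement's English description precedes it below -/
import Mathlib

section
/- Under the same setting and hypotheses as the discrete ISS-Lyapunov theorem — namely: 0 < m < k, positive integers J, N, Δx, Δt > 0, ξ > 0; diagonal matrices Λⱼ = diag(Λ⁺ⱼ, −Λ⁻ⱼ) with strictly positive diagonal Λ⁺ⱼ ∈ ℝ^{m×m}, Λ⁻ⱼ ∈ ℝ^{(k−m)×(k−m)} for j = −1,…,J; Πⱼ ∈ ℝ^{k×k}; diagonal weights Pⱼ = diag(P⁺ⱼ, P⁻ⱼ) for j = −1,…,J whose diagonal entries all lie in [ζ, β] with 0 < ζ ≤ β; K, M ∈ ℝ^{k×k} with M diagonal; disturbances bⁿ ∈ ℝ^k with b⁰ = 0; states Wⱼⁿ = (W⁺ⱼⁿ, W⁻ⱼⁿ) evolving by the upwind split scheme W̃⁺ⱼⁿ = W⁺ⱼⁿ − (Δt/Δx)·Λ⁺_{j−1}·(W⁺ⱼⁿ − W⁺_{j−1}ⁿ), W̃⁻ⱼⁿ = W⁻ⱼⁿ + (Δt/Δx)·Λ⁻_{j+1}·(W⁻_{j+1}ⁿ − W⁻ⱼⁿ),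 Wⱼ^{n+1} = W̃ⱼⁿ − Δt·ΠⱼW̃ⱼⁿ, with boundary conditions (W⁺₋₁ⁿ, W⁻_Jⁿ) = K·(W⁺_{J−1}ⁿ, W⁻₀ⁿ) + M·bⁿ; the CFL condition (Δt/Δx)·max over all j and diagonal entries of |Λⱼ| ≤ 1; η > 0 with 0 < 1 − η·Δt < 1 and vᵀΘⱼv ≥ η·vᵀPⱼv for all j and v, where Θⱼ = diag( −Λ⁺_{j−1}·(P⁺_{j+1} − P⁺ⱼ)/Δx − ((Λ⁺ⱼ − Λ⁺_{j−1})/Δx)·P⁺_{j+1} , Λ⁻_{j+1}·(P⁻ⱼ − P⁻_{j−1})/Δx + ((Λ⁻_{j+1} − Λ⁻ⱼ)/Δx)·P⁻_{j−1} ); PⱼΠⱼ + ΠⱼᵀPⱼ − Δt·ΠⱼᵀPⱼΠⱼ positive semi-definite; diag(Λ⁺_{J−1}P⁺_J, Λ⁻₀P⁻₋₁) − (1 + ξ)·Kᵀ·diag(Λ⁺₋₁P⁺₀, Λ⁻_JP⁻_{J−1})·K positive semi-definite; and ν > 0 with cᵀMᵀ·diag(Λ⁺₋₁P⁺₀, Λ⁻_JP⁻_{J−1})·Mc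 ≤ ν·|c|² for all c — the following discrete ISS estimate holds for all n = 0, …, N−1: Δx·∑_{j=0}^{J−1} |Wⱼ^{n+1}|² ≤ (β/ζ)·e^{−η·(n+1)·Δt}·Δx·∑_{j=0}^{J−1} |Wⱼ⁰|² + (ν/(ζ·η))·(1 + 1/ξ)·max_{0≤s≤n} |bˢ|². -/
open Matrix

/-- The block-diagonal matrix `diag(diagonal a, diagonal c)` built from the
diagonal entries `a` of the upper-left block and `c` of the lower-right block. -/
def blkdiag {m km : ℕ} (a : Fin m → ℝ) (c : Fin km → ℝ) :
    Matrix (Fin m ⊕ Fin km) (Fin m ⊕ Fin km) ℝ :=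
  Matrix.fromBlocks (Matrix.diagonal a) 0 0 (Matrix.diagonal c)

def quadF {m km : ℕ} (a : Fin m → ℝ) (c : Fin km → ℝ) (v : Fin m ⊕ Fin km → ℝ) : ℝ :=
  (∑ i, a i * (v (Sum.inl i))^2) + ∑ i, c i * (v (Sum.inr i))^2

lemma blkdiag_mulVec {m km : ℕ} (a : Fin m → ℝ) (c : Fin km → ℝ) (v : Fin m ⊕ Fin km → ℝ) :
    blkdiag a c *ᵥ v = Sum.elim (fun i => a i * v (Sum.inl i)) (fun i => c i * v (Sum.inr i)) := by
  funext x
  cases x with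
  | inl i =>
    simp [blkdiag, Matrix.mulVec, dotProduct, Fintype.sum_sum_type,
      Matrix.fromBlocks, Matrix.diagonal, Finset.sum_ite_eq]
  | inr i =>
    simp [blkdiag, Matrix.mulVec, dotProduct, Fintype.sum_sum_type,
      Matrix.fromBlocks, Matrix.diagonal, Finset.sum_ite_eq]

lemma quad_eq {m km : ℕ} (a : Fin m → ℝ) (c : Fin km → ℝ) (v : Fin m ⊕ Fin km → ℝ) :
    v ⬝ᵥ (blkdiag a c *ᵥ v) = quadF a c v := by
  rw [blkdiag_mulVec]
  simp [dotProduct, Fintype.sum_sum_type, quadF]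
  ring_nf
  congr 1 <;> (apply Finset.sum_congr rfl; intro i _; ring)

lemma blkdiag_transpose {m km : ℕ} (a : Fin m → ℝ) (c : Fin km → ℝ) :
    (blkdiag a c)ᵀ = blkdiag a c := by
  simp [blkdiag, Matrix.fromBlocks_transpose]

lemma dot_transpose_mulVec {k' : Type*} [Fintype k'] (A : Matrix k' k' ℝ) (w x : k' → ℝ) :
    w ⬝ᵥ (Aᵀ *ᵥ x) = (A *ᵥ w) ⬝ᵥ x := by
  rw [Matrix.dotProduct_mulVec, Matrix.vecMul_transpose]

lemma quad_conj {k' : Type*} [Fintype k'] (A D : Matrix k' k' ℝ) (w : k' → ℝ) :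
    w ⬝ᵥ ((Aᵀ * D * A) *ᵥ w) = (A *ᵥ w) ⬝ᵥ (D *ᵥ (A *ᵥ w)) := by
  rw [← Matrix.mulVec_mulVec, ← Matrix.mulVec_mulVec, dot_transpose_mulVec]

lemma src_step {k' : Type*} [Fintype k'] (P Q : Matrix k' k' ℝ) (hP : Pᵀ = P) (Δt : ℝ)
    (hΔt : 0 ≤ Δt) (w : k' → ℝ)
    (h : 0 ≤ w ⬝ᵥ ((P*Q + Qᵀ*P - Δt•(Qᵀ*P*Q)) *ᵥ w)) :
    (w - Δt • (Q *ᵥ w)) ⬝ᵥ (P *ᵥ (w - Δt • (Q *ᵥ w))) ≤ w ⬝ᵥ (P *ᵥ w) := by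
  have e1 : w ⬝ᵥ ((P*Q) *ᵥ w) = w ⬝ᵥ (P *ᵥ (Q *ᵥ w)) := by rw [Matrix.mulVec_mulVec]
  have key : ∀ x : k' → ℝ, w ⬝ᵥ (Qᵀ *ᵥ x) = (Q *ᵥ w) ⬝ᵥ x := fun x => dot_transpose_mulVec Q w x
  have e2 : w ⬝ᵥ ((Qᵀ*P) *ᵥ w) = (Q *ᵥ w) ⬝ᵥ (P *ᵥ w) := by
    rw [← Matrix.mulVec_mulVec, key]
  have e3 : w ⬝ᵥ ((Qᵀ*P*Q) *ᵥ w) = (Q *ᵥ w) ⬝ᵥ (P *ᵥ (Q *ᵥ w)) := quad_conj Q P w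
  have hsym : (Q *ᵥ w) ⬝ᵥ (P *ᵥ w) = w ⬝ᵥ (P *ᵥ (Q *ᵥ w)) := by
    rw [Matrix.dotProduct_mulVec]
    have : (Q *ᵥ w) ᵥ* P = P *ᵥ (Q *ᵥ w) := by rw [← hP, Matrix.vecMul_transpose, hP]
    rw [this, dotProduct_comm]
  have h' := h
  rw [Matrix.sub_mulVec, Matrix.add_mulVec, dotProduct_sub, dotProduct_add,
    e1, e2] at h'
  simp only [Matrix.smul_mulVec, dotProduct_smul, smul_eq_mul] at h'
  rw [e3] at h'
  simp only [Matrix.mulVec_sub, Matrix.mulVec_smul, sub_dotProduct,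
    dotProduct_sub, dotProduct_smul, smul_dotProduct, smul_eq_mul]
  rw [hsym] at h' ⊢
  nlinarith [h', hΔt]

lemma tele (T : ℤ → ℝ) (J : ℕ) :
    ∑ j ∈ Finset.Icc (0:ℤ) ((J:ℤ)-1), (T j - T (j-1)) = T ((J:ℤ)-1) - T (-1) := by
  induction J with
  | zero => simp
  | succ n ih =>
    have h1 : ((n+1 : ℕ) : ℤ) - 1 = (n:ℤ) := by push_cast; ring
    have h2 : Finset.Icc (0:ℤ) (n:ℤ) = insert (n:ℤ) (Finset.Icc 0 ((n:ℤ)-1)) := by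
      ext x; simp; omega
    rw [h1, h2, Finset.sum_insert (by simp), ih]
    ring

lemma young (ξ d x y : ℝ) (hξ : 0 < ξ) (hd : 0 ≤ d) :
    d * (x + y)^2 ≤ (1+ξ) * (d * x^2) + (1+1/ξ) * (d * y^2) := by
  have h : 0 ≤ d * (ξ * x - y)^2 / ξ := by positivity
  have hξ' : ξ ≠ 0 := ne_of_gt hξ
  calc d * (x + y)^2 = (1+ξ) * (d * x^2) + (1+1/ξ) * (d * y^2) - d * (ξ*x - y)^2/ξ := by
        field_simp; ring
    _ ≤ (1+ξ) * (d * x^2) + (1+1/ξ) * (d * y^2) := by linarith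

lemma young_quad {m km : ℕ} (ξ : ℝ) (hξ : 0 < ξ) (a : Fin m → ℝ) (c : Fin km → ℝ)
    (ha : ∀ i, 0 ≤ a i) (hc : ∀ i, 0 ≤ c i) (x y : Fin m ⊕ Fin km → ℝ) :
    quadF a c (x + y) ≤ (1+ξ) * quadF a c x + (1+1/ξ) * quadF a c y := by
  unfold quadF
  simp only [Pi.add_apply]
  have h1 : ∑ i, a i * (x (Sum.inl i) + y (Sum.inl i))^2 ≤
      ∑ i, ((1+ξ) * (a i * (x (Sum.inl i))^2) + (1+1/ξ) * (a i * (y (Sum.inl i))^2)) :=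
    Finset.sum_le_sum (fun i _ => young ξ _ _ _ hξ (ha i))
  have h2 : ∑ i, c i * (x (Sum.inr i) + y (Sum.inr i))^2 ≤
      ∑ i, ((1+ξ) * (c i * (x (Sum.inr i))^2) + (1+1/ξ) * (c i * (y (Sum.inr i))^2)) :=
    Finset.sum_le_sum (fun i _ => young ξ _ _ _ hξ (hc i))
  simp only [Finset.sum_add_distrib, ← Finset.mul_sum] at h1 h2
  linarith

lemma upwind_bound (μ p a c : ℝ) (h0 : 0 ≤ μ) (h1 : μ ≤ 1) (hp : 0 ≤ p) :
    p * (a - μ * (a - c))^2 ≤ p * a^2 - μ * (p * (a^2 - c^2)) := by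
  nlinarith [mul_nonneg (mul_nonneg (mul_nonneg hp h0) (sub_nonneg.2 h1)) (sq_nonneg (a - c))]

theorem discrete_iss_in_L2_norm (m km J N : ℕ)
    (hm : 0 < m) (hkm : 0 < km) (hJ : 0 < J) (hN : 0 < N)
    (Δx Δt ξ η ν ζ β : ℝ) (hΔx : 0 < Δx) (hΔt : 0 < Δt) (hξ : 0 < ξ)
    (hη : 0 < η) (hν : 0 < ν) (hζ : 0 < ζ) (hζβ : ζ ≤ β)
    (hηΔt0 : 0 < 1 - η * Δt) (hηΔt1 : 1 - η * Δt < 1)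
    (Λp Pp : ℤ → Fin m → ℝ) (Λm Pm : ℤ → Fin km → ℝ)
    (Pim : ℤ → Matrix (Fin m ⊕ Fin km) (Fin m ⊕ Fin km) ℝ)
    (K M : Matrix (Fin m ⊕ Fin km) (Fin m ⊕ Fin km) ℝ) (hM : M.IsDiag)
    (b : ℕ → Fin m ⊕ Fin km → ℝ) (hb0 : b 0 = 0)
    (hΛppos : ∀ j : ℤ, -1 ≤ j → j ≤ (J : ℤ) → ∀ i, 0 < Λp j i)
    (hΛmpos : ∀ j : ℤ, -1 ≤ j → j ≤ (J : ℤ) → ∀ i, 0 < Λm j i)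
    (hPpbound : ∀ j : ℤ, -1 ≤ j → j ≤ (J : ℤ) → ∀ i, Pp j i ∈ Set.Icc ζ β)
    (hPmbound : ∀ j : ℤ, -1 ≤ j → j ≤ (J : ℤ) → ∀ i, Pm j i ∈ Set.Icc ζ β)
    -- the upwind split scheme
    (W Wtil : ℕ → ℤ → Fin m ⊕ Fin km → ℝ)
    (hplus : ∀ n : ℕ, n < N → ∀ j : ℤ, 0 ≤ j → j < (J : ℤ) → ∀ i : Fin m,
      Wtil n j (Sum.inl i) = W n j (Sum.inl i)
        - (Δt / Δx) * Λp (j - 1) i * (W n j (Sum.inl i) - W n (j - 1) (Sum.inl i)))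
    (hminus : ∀ n : ℕ, n < N → ∀ j : ℤ, 0 ≤ j → j < (J : ℤ) → ∀ i : Fin km,
      Wtil n j (Sum.inr i) = W n j (Sum.inr i)
        + (Δt / Δx) * Λm (j + 1) i * (W n (j + 1) (Sum.inr i) - W n j (Sum.inr i)))
    (hstep : ∀ n : ℕ, n < N → ∀ j : ℤ, 0 ≤ j → j < (J : ℤ) →
      W (n + 1) j = Wtil n j - Δt • (Pim j *ᵥ Wtil n j))
    -- discrete boundary conditions with disturbance
    (hBC : ∀ n : ℕ, n ≤ N →
      Sum.elim (fun i => W n (-1) (Sum.inl i)) (fun i => W n (J : ℤ) (Sum.inr i)) =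
        K *ᵥ Sum.elim (fun i => W n ((J : ℤ) - 1) (Sum.inl i))
            (fun i => W n 0 (Sum.inr i)) + M *ᵥ b n)
    -- CFL condition
    (hCFL : ∀ j : ℤ, -1 ≤ j → j ≤ (J : ℤ) →
      (∀ i, (Δt / Δx) * Λp j i ≤ 1) ∧ (∀ i, (Δt / Δx) * Λm j i ≤ 1))
    -- (i) discrete interior dissipativity
    (hdiss : ∀ j : ℤ, 0 ≤ j → j < (J : ℤ) → ∀ v : Fin m ⊕ Fin km → ℝ,
      η * (v ⬝ᵥ (blkdiag (Pp j) (Pm j) *ᵥ v)) ≤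
        v ⬝ᵥ (blkdiag
          (fun i => -Λp (j - 1) i * ((Pp (j + 1) i - Pp j i) / Δx)
            - ((Λp j i - Λp (j - 1) i) / Δx) * Pp (j + 1) i)
          (fun i => Λm (j + 1) i * ((Pm j i - Pm (j - 1) i) / Δx)
            + ((Λm (j + 1) i - Λm j i) / Δx) * Pm (j - 1) i) *ᵥ v))
    -- (ii) source matrix positive semi-definite
    (hsrc : ∀ j : ℤ, 0 ≤ j → j < (J : ℤ) → ∀ v : Fin m ⊕ Fin km → ℝ,
      0 ≤ v ⬝ᵥ ((blkdiag (Pp j) (Pm j) * Pim j + (Pim j)ᵀ * blkdiag (Pp j) (Pm j)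
          - Δt • ((Pim j)ᵀ * blkdiag (Pp j) (Pm j) * Pim j)) *ᵥ v))
    -- (iii) boundary matrix positive semi-definite
    (hbdry : ∀ v : Fin m ⊕ Fin km → ℝ,
      0 ≤ v ⬝ᵥ ((blkdiag (fun i => Λp ((J : ℤ) - 1) i * Pp (J : ℤ) i)
            (fun i => Λm 0 i * Pm (-1) i)
          - (1 + ξ) • (Kᵀ * blkdiag (fun i => Λp (-1) i * Pp 0 i)
              (fun i => Λm (J : ℤ) i * Pm ((J : ℤ) - 1) i) * K)) *ᵥ v))
    -- (iv) bound on the disturbance matrix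
    (hnu : ∀ c : Fin m ⊕ Fin km → ℝ,
      c ⬝ᵥ ((Mᵀ * blkdiag (fun i => Λp (-1) i * Pp 0 i)
          (fun i => Λm (J : ℤ) i * Pm ((J : ℤ) - 1) i) * M) *ᵥ c) ≤
        ν * ∑ i, (c i) ^ 2) :
    ∀ n : ℕ, n < N →
      Δx * ∑ j ∈ Finset.Icc (0 : ℤ) ((J : ℤ) - 1), ∑ i, (W (n + 1) j i) ^ 2 ≤
        (β / ζ) * Real.exp (-η * ((n + 1) * Δt)) *
            (Δx * ∑ j ∈ Finset.Icc (0 : ℤ) ((J : ℤ) - 1), ∑ i, (W 0 j i) ^ 2)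
          + (ν / (ζ * η)) * (1 + 1 / ξ) *
              (Finset.range (n + 1)).sup' Finset.nonempty_range_add_one
                (fun s => ∑ i, (b s i) ^ 2) := by
  classical
  have hΔxne : Δx ≠ 0 := ne_of_gt hΔx
  have hηne : η ≠ 0 := ne_of_gt hη
  have hζne : ζ ≠ 0 := ne_of_gt hζ
  have hdiv : 0 ≤ Δt / Δx := div_nonneg hΔt.le hΔx.le
  have hξ1 : (0:ℝ) < 1 + 1/ξ := by positivity
  have hQlow : ∀ s : ℕ, ∀ j ∈ Finset.Icc (0:ℤ) ((J:ℤ)-1),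
      ζ * ∑ i, (W s j i)^2 ≤ quadF (Pp j) (Pm j) (W s j) := by
    intro s j hj
    rw [Finset.mem_Icc] at hj
    obtain ⟨hj0, hj1⟩ := hj
    rw [Fintype.sum_sum_type, mul_add, Finset.mul_sum, Finset.mul_sum]
    unfold quadF
    refine add_le_add (Finset.sum_le_sum fun i _ => ?_) (Finset.sum_le_sum fun i _ => ?_)
    · exact mul_le_mul_of_nonneg_right (hPpbound j (by omega) (by omega) i).1 (sq_nonneg _)
    · exact mul_le_mul_of_nonneg_right (hPmbound j (by omega) (by omega) i).1 (sq_nonneg _)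
  have hQup : ∀ s : ℕ, ∀ j ∈ Finset.Icc (0:ℤ) ((J:ℤ)-1),
      quadF (Pp j) (Pm j) (W s j) ≤ β * ∑ i, (W s j i)^2 := by
    intro s j hj
    rw [Finset.mem_Icc] at hj
    obtain ⟨hj0, hj1⟩ := hj
    rw [Fintype.sum_sum_type, mul_add, Finset.mul_sum, Finset.mul_sum]
    unfold quadF
    refine add_le_add (Finset.sum_le_sum fun i _ => ?_) (Finset.sum_le_sum fun i _ => ?_)
    · exact mul_le_mul_of_nonneg_right (hPpbound j (by omega) (by omega) i).2 (sq_nonneg _)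
    · exact mul_le_mul_of_nonneg_right (hPmbound j (by omega) (by omega) i).2 (sq_nonneg _)
  have hVlow : ∀ s : ℕ,
      ζ * ∑ j ∈ Finset.Icc (0:ℤ) ((J:ℤ)-1), ∑ i, (W s j i)^2 ≤
        ∑ j ∈ Finset.Icc (0:ℤ) ((J:ℤ)-1), quadF (Pp j) (Pm j) (W s j) := by
    intro s
    rw [Finset.mul_sum]
    exact Finset.sum_le_sum (hQlow s)
  have hVup : ∀ s : ℕ,
      ∑ j ∈ Finset.Icc (0:ℤ) ((J:ℤ)-1), quadF (Pp j) (Pm j) (W s j) ≤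
        β * ∑ j ∈ Finset.Icc (0:ℤ) ((J:ℤ)-1), ∑ i, (W s j i)^2 := by
    intro s
    rw [Finset.mul_sum]
    exact Finset.sum_le_sum (hQup s)
  have hSnn : ∀ s : ℕ, 0 ≤ ∑ j ∈ Finset.Icc (0:ℤ) ((J:ℤ)-1), ∑ i, (W s j i)^2 :=
    fun s => Finset.sum_nonneg fun j _ => Finset.sum_nonneg fun i _ => sq_nonneg _
  have hBnn : ∀ s : ℕ, 0 ≤ ∑ i, (b s i)^2 :=
    fun s => Finset.sum_nonneg fun i _ => sq_nonneg _
  have hB0 : ∑ i, (b 0 i)^2 = 0 := by rw [hb0]; simp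
  -- THE ONE-STEP LYAPUNOV ESTIMATE
  have hstep1 : ∀ n : ℕ, n < N →
      ∑ j ∈ Finset.Icc (0:ℤ) ((J:ℤ)-1), quadF (Pp j) (Pm j) (W (n+1) j) ≤
        (1 - η*Δt) * (∑ j ∈ Finset.Icc (0:ℤ) ((J:ℤ)-1), quadF (Pp j) (Pm j) (W n j))
          + (Δt/Δx) * (ν * (1+1/ξ) * ∑ i, (b n i)^2) := by
    intro n hn
    set Tp : ℤ → ℝ := fun j => ∑ i, Λp j i * Pp (j+1) i * (W n j (Sum.inl i))^2 with hTp
    set Sm : ℤ → ℝ := fun j => ∑ i, Λm j i * Pm (j-1) i * (W n j (Sum.inr i))^2 with hSm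
    -- (1) source part
    have h1 : ∀ j ∈ Finset.Icc (0:ℤ) ((J:ℤ)-1),
        quadF (Pp j) (Pm j) (W (n+1) j) ≤ quadF (Pp j) (Pm j) (Wtil n j) := by
      intro j hj
      rw [Finset.mem_Icc] at hj
      rw [hstep n hn j hj.1 (by omega), ← quad_eq, ← quad_eq]
      exact src_step _ _ (blkdiag_transpose _ _) Δt hΔt.le _ (hsrc j hj.1 (by omega) _)
    -- (2) interior upwind estimate with telescoping decomposition
    have h2 : ∀ j ∈ Finset.Icc (0:ℤ) ((J:ℤ)-1),
        quadF (Pp j) (Pm j) (Wtil n j) ≤ quadF (Pp j) (Pm j) (W n j)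
          - (Δt/Δx) * (Δx * (η * quadF (Pp j) (Pm j) (W n j))
              + (Tp j - Tp (j-1)) - (Sm (j+1) - Sm j)) := by
      intro j hj
      rw [Finset.mem_Icc] at hj
      obtain ⟨hj0, hj1⟩ := hj
      have hup : ∀ i : Fin m, Pp j i * (Wtil n j (Sum.inl i))^2 ≤
          Pp j i * (W n j (Sum.inl i))^2
            - (Δt/Δx) * (Λp (j-1) i * Pp j i *
                ((W n j (Sum.inl i))^2 - (W n (j-1) (Sum.inl i))^2)) := by
        intro i
        have hμ0 : 0 ≤ Δt / Δx * Λp (j-1) i :=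
          mul_nonneg hdiv (hΛppos (j-1) (by omega) (by omega) i).le
        have hμ1 := (hCFL (j-1) (by omega) (by omega)).1 i
        have hp0 : 0 ≤ Pp j i := le_trans hζ.le (hPpbound j (by omega) (by omega) i).1
        rw [hplus n hn j hj0 (by omega) i]
        calc Pp j i * (W n j (Sum.inl i)
              - Δt / Δx * Λp (j-1) i * (W n j (Sum.inl i) - W n (j-1) (Sum.inl i)))^2
            ≤ Pp j i * (W n j (Sum.inl i))^2 - (Δt / Δx * Λp (j-1) i) *
                (Pp j i * ((W n j (Sum.inl i))^2 - (W n (j-1) (Sum.inl i))^2)) :=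
              upwind_bound _ _ _ _ hμ0 hμ1 hp0
          _ = _ := by ring
      have hvm : ∀ i : Fin km, Pm j i * (Wtil n j (Sum.inr i))^2 ≤
          Pm j i * (W n j (Sum.inr i))^2
            - (Δt/Δx) * (Λm (j+1) i * Pm j i *
                ((W n j (Sum.inr i))^2 - (W n (j+1) (Sum.inr i))^2)) := by
        intro i
        have hμ0 : 0 ≤ Δt / Δx * Λm (j+1) i :=
          mul_nonneg hdiv (hΛmpos (j+1) (by omega) (by omega) i).le
        have hμ1 := (hCFL (j+1) (by omega) (by omega)).2 i
        have hp0 : 0 ≤ Pm j i := le_trans hζ.le (hPmbound j (by omega) (by omega) i).1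
        have hrw : W n j (Sum.inr i)
              + Δt / Δx * Λm (j+1) i * (W n (j+1) (Sum.inr i) - W n j (Sum.inr i))
            = W n j (Sum.inr i)
              - Δt / Δx * Λm (j+1) i * (W n j (Sum.inr i) - W n (j+1) (Sum.inr i)) := by ring
        rw [hminus n hn j hj0 (by omega) i, hrw]
        calc Pm j i * (W n j (Sum.inr i)
              - Δt / Δx * Λm (j+1) i * (W n j (Sum.inr i) - W n (j+1) (Sum.inr i)))^2
            ≤ Pm j i * (W n j (Sum.inr i))^2 - (Δt / Δx * Λm (j+1) i) *
                (Pm j i * ((W n j (Sum.inr i))^2 - (W n (j+1) (Sum.inr i))^2)) :=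
              upwind_bound _ _ _ _ hμ0 hμ1 hp0
          _ = _ := by ring
      -- summed plus part
      have hA : ∑ i, Pp j i * (Wtil n j (Sum.inl i))^2 ≤
          (∑ i, Pp j i * (W n j (Sum.inl i))^2)
            - (Δt/Δx) * ((∑ i, (Λp (j-1) i * Pp j i - Λp j i * Pp (j+1) i)
                  * (W n j (Sum.inl i))^2)
                + (Tp j - Tp (j-1))) := by
        calc ∑ i, Pp j i * (Wtil n j (Sum.inl i))^2
            ≤ ∑ i, (Pp j i * (W n j (Sum.inl i))^2
                - (Δt/Δx) * (Λp (j-1) i * Pp j i *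
                    ((W n j (Sum.inl i))^2 - (W n (j-1) (Sum.inl i))^2))) :=
              Finset.sum_le_sum (fun i _ => hup i)
          _ = _ := by
              rw [Finset.sum_sub_distrib, ← Finset.mul_sum]
              congr 2
              simp only [hTp]
              simp only [show ∀ z:ℤ, z - 1 + 1 = z from fun z => by ring]
              rw [← Finset.sum_sub_distrib, ← Finset.sum_add_distrib]
              exact Finset.sum_congr rfl (fun i _ => by ring)
      -- summed minus part
      have hB : ∑ i, Pm j i * (Wtil n j (Sum.inr i))^2 ≤
          (∑ i, Pm j i * (W n j (Sum.inr i))^2)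
            - (Δt/Δx) * ((∑ i, (Λm (j+1) i * Pm j i - Λm j i * Pm (j-1) i)
                  * (W n j (Sum.inr i))^2)
                - (Sm (j+1) - Sm j)) := by
        calc ∑ i, Pm j i * (Wtil n j (Sum.inr i))^2
            ≤ ∑ i, (Pm j i * (W n j (Sum.inr i))^2
                - (Δt/Δx) * (Λm (j+1) i * Pm j i *
                    ((W n j (Sum.inr i))^2 - (W n (j+1) (Sum.inr i))^2))) :=
              Finset.sum_le_sum (fun i _ => hvm i)
          _ = _ := by
              rw [Finset.sum_sub_distrib, ← Finset.mul_sum]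
              congr 2
              simp only [hSm]
              simp only [show ∀ z:ℤ, z + 1 - 1 = z from fun z => by ring]
              rw [← Finset.sum_sub_distrib, ← Finset.sum_sub_distrib]
              exact Finset.sum_congr rfl (fun i _ => by ring)
      -- dissipativity
      have hθ : Δx * (η * quadF (Pp j) (Pm j) (W n j)) ≤
          (∑ i, (Λp (j-1) i * Pp j i - Λp j i * Pp (j+1) i) * (W n j (Sum.inl i))^2)
            + ∑ i, (Λm (j+1) i * Pm j i - Λm j i * Pm (j-1) i) * (W n j (Sum.inr i))^2 := by
        have hd := hdiss j hj0 (by omega) (W n j)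
        rw [quad_eq, quad_eq] at hd
        have hd' := mul_le_mul_of_nonneg_left hd hΔx.le
        refine le_trans hd' (le_of_eq ?_)
        have hXp : ∀ i : Fin m, -Λp (j-1) i * ((Pp (j+1) i - Pp j i)/Δx)
            - (Λp j i - Λp (j-1) i)/Δx * Pp (j+1) i
            = (Λp (j-1) i * Pp j i - Λp j i * Pp (j+1) i)/Δx := by
          intro i; field_simp; ring
        have hXm : ∀ i : Fin km, Λm (j+1) i * ((Pm j i - Pm (j-1) i)/Δx)
            + (Λm (j+1) i - Λm j i)/Δx * Pm (j-1) i
            = (Λm (j+1) i * Pm j i - Λm j i * Pm (j-1) i)/Δx := by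
          intro i; field_simp; ring
        simp only [quadF]
        rw [mul_add, Finset.mul_sum, Finset.mul_sum]
        congr 1
        · refine Finset.sum_congr rfl (fun i _ => ?_)
          rw [hXp i, div_mul_eq_mul_div, ← mul_div_assoc, mul_comm Δx _, mul_div_assoc,
            div_self hΔxne, mul_one]
        · refine Finset.sum_congr rfl (fun i _ => ?_)
          rw [hXm i, div_mul_eq_mul_div, ← mul_div_assoc, mul_comm Δx _, mul_div_assoc,
            div_self hΔxne, mul_one]
      have hkey := mul_le_mul_of_nonneg_left
        (show Δx * (η * quadF (Pp j) (Pm j) (W n j))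
              + (Tp j - Tp (j-1)) - (Sm (j+1) - Sm j) ≤
            ((∑ i, (Λp (j-1) i * Pp j i - Λp j i * Pp (j+1) i) * (W n j (Sum.inl i))^2)
              + ∑ i, (Λm (j+1) i * Pm j i - Λm j i * Pm (j-1) i) * (W n j (Sum.inr i))^2)
              + (Tp j - Tp (j-1)) - (Sm (j+1) - Sm j) from by linarith) hdiv
      simp only [quadF]
      simp only [quadF] at hkey
      linarith [hA, hB, hkey]
    -- telescoping sums
    have e1 : ∑ j ∈ Finset.Icc (0:ℤ) ((J:ℤ)-1), (Tp j - Tp (j-1))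
        = Tp ((J:ℤ)-1) - Tp (-1) := tele Tp J
    have e2 : ∑ j ∈ Finset.Icc (0:ℤ) ((J:ℤ)-1), (Sm (j+1) - Sm j)
        = Sm (J:ℤ) - Sm 0 := by
      have h := tele (fun j => Sm (j+1)) J
      simp only [show ∀ z:ℤ, z - 1 + 1 = z from fun z => by ring,
        show ((-1:ℤ) + 1) = 0 from by ring] at h
      exact h
    -- boundary estimate
    have hbd : Tp (-1) + Sm (J:ℤ) ≤ (Tp ((J:ℤ)-1) + Sm 0)
        + ν * (1+1/ξ) * ∑ i, (b n i)^2 := by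
      have hbc := hBC n hn.le
      -- identify the incoming boundary quadratic form
      have hin : Tp (-1) + Sm (J:ℤ) =
          quadF (fun i => Λp (-1) i * Pp 0 i) (fun i => Λm (J:ℤ) i * Pm ((J:ℤ)-1) i)
            (Sum.elim (fun i => W n (-1) (Sum.inl i)) (fun i => W n (J:ℤ) (Sum.inr i))) := by
        simp only [hTp, hSm, quadF, Sum.elim_inl, Sum.elim_inr,
          show ((-1:ℤ) + 1) = 0 from by ring]
      have hout : Tp ((J:ℤ)-1) + Sm 0 =
          quadF (fun i => Λp ((J:ℤ)-1) i * Pp (J:ℤ) i) (fun i => Λm 0 i * Pm (-1) i)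
            (Sum.elim (fun i => W n ((J:ℤ)-1) (Sum.inl i)) (fun i => W n 0 (Sum.inr i))) := by
        simp only [hTp, hSm, quadF, Sum.elim_inl, Sum.elim_inr,
          show ((J:ℤ) - 1 + 1) = (J:ℤ) from by ring,
          show ((0:ℤ) - 1) = -1 from by ring]
      set wout : Fin m ⊕ Fin km → ℝ :=
        Sum.elim (fun i => W n ((J:ℤ)-1) (Sum.inl i)) (fun i => W n 0 (Sum.inr i)) with hwout
      have hann : ∀ i, 0 ≤ Λp (-1) i * Pp 0 i := by
        intro i
        exact mul_nonneg (hΛppos (-1) (by omega) (by omega) i).le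
          (le_trans hζ.le (hPpbound 0 (by omega) (by omega) i).1)
      have hcnn : ∀ i, 0 ≤ Λm (J:ℤ) i * Pm ((J:ℤ)-1) i := by
        intro i
        exact mul_nonneg (hΛmpos (J:ℤ) (by omega) (by omega) i).le
          (le_trans hζ.le (hPmbound ((J:ℤ)-1) (by omega) (by omega) i).1)
      -- Young
      have hyoung := young_quad ξ hξ (fun i => Λp (-1) i * Pp 0 i)
        (fun i => Λm (J:ℤ) i * Pm ((J:ℤ)-1) i) hann hcnn (K *ᵥ wout) (M *ᵥ b n)
      -- boundary psd condition
      have hKbd : (1+ξ) * quadF (fun i => Λp (-1) i * Pp 0 i)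
          (fun i => Λm (J:ℤ) i * Pm ((J:ℤ)-1) i) (K *ᵥ wout) ≤
          quadF (fun i => Λp ((J:ℤ)-1) i * Pp (J:ℤ) i) (fun i => Λm 0 i * Pm (-1) i) wout := by
        have h := hbdry wout
        rw [Matrix.sub_mulVec, dotProduct_sub, Matrix.smul_mulVec,
          dotProduct_smul, smul_eq_mul, quad_conj, quad_eq, quad_eq] at h
        linarith
      -- disturbance bound
      have hMbd : quadF (fun i => Λp (-1) i * Pp 0 i)
          (fun i => Λm (J:ℤ) i * Pm ((J:ℤ)-1) i) (M *ᵥ b n) ≤ ν * ∑ i, (b n i)^2 := by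
        have h := hnu (b n)
        rw [quad_conj, quad_eq] at h
        exact h
      rw [hin, hout, hbc]
      calc quadF (fun i => Λp (-1) i * Pp 0 i) (fun i => Λm (J:ℤ) i * Pm ((J:ℤ)-1) i)
            (K *ᵥ wout + M *ᵥ b n)
          ≤ (1+ξ) * quadF (fun i => Λp (-1) i * Pp 0 i)
              (fun i => Λm (J:ℤ) i * Pm ((J:ℤ)-1) i) (K *ᵥ wout)
            + (1+1/ξ) * quadF (fun i => Λp (-1) i * Pp 0 i)
              (fun i => Λm (J:ℤ) i * Pm ((J:ℤ)-1) i) (M *ᵥ b n) := hyoung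
        _ ≤ quadF (fun i => Λp ((J:ℤ)-1) i * Pp (J:ℤ) i) (fun i => Λm 0 i * Pm (-1) i) wout
            + (1+1/ξ) * (ν * ∑ i, (b n i)^2) := by
              have := mul_le_mul_of_nonneg_left hMbd hξ1.le
              linarith
        _ = quadF (fun i => Λp ((J:ℤ)-1) i * Pp (J:ℤ) i) (fun i => Λm 0 i * Pm (-1) i) wout
            + ν * (1+1/ξ) * ∑ i, (b n i)^2 := by ring
    -- put things together
    have expand : ∀ j ∈ Finset.Icc (0:ℤ) ((J:ℤ)-1),
        quadF (Pp j) (Pm j) (W n j)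
          - (Δt/Δx) * (Δx * (η * quadF (Pp j) (Pm j) (W n j))
              + (Tp j - Tp (j-1)) - (Sm (j+1) - Sm j))
        = (1 - η*Δt) * quadF (Pp j) (Pm j) (W n j)
            - ((Δt/Δx) * (Tp j - Tp (j-1)) - (Δt/Δx) * (Sm (j+1) - Sm j)) := by
      intro j _
      field_simp
      ring
    calc ∑ j ∈ Finset.Icc (0:ℤ) ((J:ℤ)-1), quadF (Pp j) (Pm j) (W (n+1) j)
        ≤ ∑ j ∈ Finset.Icc (0:ℤ) ((J:ℤ)-1), quadF (Pp j) (Pm j) (Wtil n j) :=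
          Finset.sum_le_sum h1
      _ ≤ ∑ j ∈ Finset.Icc (0:ℤ) ((J:ℤ)-1), (quadF (Pp j) (Pm j) (W n j)
            - (Δt/Δx) * (Δx * (η * quadF (Pp j) (Pm j) (W n j))
                + (Tp j - Tp (j-1)) - (Sm (j+1) - Sm j))) := Finset.sum_le_sum h2
      _ = (1 - η*Δt) * (∑ j ∈ Finset.Icc (0:ℤ) ((J:ℤ)-1), quadF (Pp j) (Pm j) (W n j))
            - ((Δt/Δx) * (Tp ((J:ℤ)-1) - Tp (-1)) - (Δt/Δx) * (Sm (J:ℤ) - Sm 0)) := by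
          rw [Finset.sum_congr rfl expand, Finset.sum_sub_distrib, Finset.sum_sub_distrib,
            ← Finset.mul_sum, ← Finset.mul_sum, ← Finset.mul_sum, e1, e2]
      _ ≤ (1 - η*Δt) * (∑ j ∈ Finset.Icc (0:ℤ) ((J:ℤ)-1), quadF (Pp j) (Pm j) (W n j))
            + (Δt/Δx) * (ν * (1+1/ξ) * ∑ i, (b n i)^2) := by
          have h := mul_le_mul_of_nonneg_left hbd hdiv
          have expand2 : (Δt/Δx) * ((Tp ((J:ℤ)-1) + Sm 0) + ν * (1+1/ξ) * ∑ i, (b n i)^2)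
              = (Δt/Δx) * (Tp ((J:ℤ)-1) + Sm 0)
                + (Δt/Δx) * (ν * (1+1/ξ) * ∑ i, (b n i)^2) := by ring
          rw [expand2] at h
          have expand3 : (Δt/Δx) * (Tp (-1) + Sm (J:ℤ))
              = (Δt/Δx) * Tp (-1) + (Δt/Δx) * Sm (J:ℤ) := by ring
          nlinarith [h]
    done
  -- THE ITERATION
  have hiter : ∀ p : ℕ, ∀ hp : 0 < p, ∀ k : ℕ, k ≤ N → k ≤ p →
      ∑ j ∈ Finset.Icc (0:ℤ) ((J:ℤ)-1), quadF (Pp j) (Pm j) (W k j) ≤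
        (1 - η*Δt)^k * (∑ j ∈ Finset.Icc (0:ℤ) ((J:ℤ)-1), quadF (Pp j) (Pm j) (W 0 j))
          + (ν * (1+1/ξ) / (η*Δx)) *
            ((Finset.range p).sup' (Finset.nonempty_range_iff.mpr (by omega))
              (fun s => ∑ i, (b s i)^2)) := by
    intro p hp
    have hcnn : 0 ≤ ν * (1+1/ξ) / (η*Δx) := by positivity
    have hsupnn : 0 ≤ (Finset.range p).sup' (Finset.nonempty_range_iff.mpr (by omega))
        (fun s => ∑ i, (b s i)^2) := by
      exact le_trans (hBnn 0)
        (Finset.le_sup' (fun s => ∑ i, (b s i)^2) (Finset.mem_range.mpr hp))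
    intro k
    induction k with
    | zero =>
      intro _ _
      rw [pow_zero, one_mul]
      exact le_add_of_nonneg_right (mul_nonneg hcnn hsupnn)
    | succ k ih =>
      intro hkN hkp
      have ihk := ih (by omega) (by omega)
      have h := hstep1 k (by omega)
      have hBle : (∑ i, (b k i)^2) ≤ (Finset.range p).sup'
          (Finset.nonempty_range_iff.mpr (by omega)) (fun s => ∑ i, (b s i)^2) :=
        Finset.le_sup' (fun s => ∑ i, (b s i)^2) (Finset.mem_range.mpr (by omega))
      have hee : (Δt/Δx) * (ν * (1+1/ξ) * ∑ i, (b k i)^2)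
          = (ν * (1+1/ξ) / (η*Δx)) * (η*Δt) * ∑ i, (b k i)^2 := by
        field_simp
      refine le_trans h ?_
      rw [hee]
      have t1 := mul_le_mul_of_nonneg_left ihk hηΔt0.le
      have t2 := mul_le_mul_of_nonneg_left hBle
        (by positivity : (0:ℝ) ≤ (ν * (1+1/ξ) / (η*Δx)) * (η*Δt))
      calc (1 - η*Δt) * (∑ j ∈ Finset.Icc (0:ℤ) ((J:ℤ)-1), quadF (Pp j) (Pm j) (W k j))
            + (ν * (1+1/ξ) / (η*Δx)) * (η*Δt) * ∑ i, (b k i)^2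
          ≤ (1 - η*Δt) * ((1 - η*Δt)^k *
                (∑ j ∈ Finset.Icc (0:ℤ) ((J:ℤ)-1), quadF (Pp j) (Pm j) (W 0 j))
              + (ν * (1+1/ξ) / (η*Δx)) *
                ((Finset.range p).sup' (Finset.nonempty_range_iff.mpr (by omega))
                  (fun s => ∑ i, (b s i)^2)))
            + (ν * (1+1/ξ) / (η*Δx)) * (η*Δt) *
                ((Finset.range p).sup' (Finset.nonempty_range_iff.mpr (by omega))
                  (fun s => ∑ i, (b s i)^2)) := by
            exact add_le_add t1 t2
        _ = (1 - η*Δt)^(k+1) *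
              (∑ j ∈ Finset.Icc (0:ℤ) ((J:ℤ)-1), quadF (Pp j) (Pm j) (W 0 j))
            + ((ν * (1+1/ξ) / (η*Δx)) -
                (ν * (1+1/ξ) / (η*Δx)) * (η*Δt) + (ν * (1+1/ξ) / (η*Δx)) * (η*Δt)) *
              ((Finset.range p).sup' (Finset.nonempty_range_iff.mpr (by omega))
                (fun s => ∑ i, (b s i)^2)) := by ring
        _ = (1 - η*Δt)^(k+1) *
              (∑ j ∈ Finset.Icc (0:ℤ) ((J:ℤ)-1), quadF (Pp j) (Pm j) (W 0 j))
            + (ν * (1+1/ξ) / (η*Δx)) *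
              ((Finset.range p).sup' (Finset.nonempty_range_iff.mpr (by omega))
                (fun s => ∑ i, (b s i)^2)) := by ring
  -- FINAL ASSEMBLY
  intro n hn
  have hfin := hiter (n+1) (by omega) (n+1) (by omega) le_rfl
  have hsupeq : (Finset.range (n+1)).sup'
      (Finset.nonempty_range_iff.mpr (by omega)) (fun s => ∑ i, (b s i)^2)
      = (Finset.range (n+1)).sup' Finset.nonempty_range_add_one (fun s => ∑ i, (b s i)^2) := rfl
  rw [hsupeq] at hfin
  have hE : (1 - η*Δt)^(n+1) ≤ Real.exp (-η * ((n + 1) * Δt)) := by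
    have h1 : 1 - η*Δt ≤ Real.exp (-(η*Δt)) := by
      have := Real.add_one_le_exp (-(η*Δt))
      linarith
    calc (1 - η*Δt)^(n+1) ≤ (Real.exp (-(η*Δt)))^(n+1) :=
          pow_le_pow_left₀ hηΔt0.le h1 (n+1)
      _ = Real.exp (-η * ((n + 1) * Δt)) := by
          rw [← Real.exp_nat_mul]
          congr 1
          push_cast
          ring
  have hPnn : (0:ℝ) ≤ (1 - η*Δt)^(n+1) := pow_nonneg hηΔt0.le _
  have hEnn : (0:ℝ) ≤ Real.exp (-η * ((n + 1) * Δt)) := (Real.exp_pos _).le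
  have hsupnn : 0 ≤ (Finset.range (n+1)).sup' Finset.nonempty_range_add_one
      (fun s => ∑ i, (b s i)^2) :=
    le_trans (hBnn 0)
      (Finset.le_sup' (fun s => ∑ i, (b s i)^2) (Finset.mem_range.mpr (Nat.succ_pos n)))
  have hcnn : 0 ≤ ν * (1+1/ξ) / (η*Δx) := by positivity
  have hβS0 : (0:ℝ) ≤ β * ∑ j ∈ Finset.Icc (0:ℤ) ((J:ℤ)-1), ∑ i, (W 0 j i)^2 :=
    mul_nonneg (le_trans hζ.le hζβ) (hSnn 0)
  have hPV : (1 - η*Δt)^(n+1) *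
      (∑ j ∈ Finset.Icc (0:ℤ) ((J:ℤ)-1), quadF (Pp j) (Pm j) (W 0 j)) ≤
      Real.exp (-η * ((n + 1) * Δt)) *
        (β * ∑ j ∈ Finset.Icc (0:ℤ) ((J:ℤ)-1), ∑ i, (W 0 j i)^2) :=
    calc (1 - η*Δt)^(n+1) *
        (∑ j ∈ Finset.Icc (0:ℤ) ((J:ℤ)-1), quadF (Pp j) (Pm j) (W 0 j))
        ≤ (1 - η*Δt)^(n+1) * (β * ∑ j ∈ Finset.Icc (0:ℤ) ((J:ℤ)-1), ∑ i, (W 0 j i)^2) :=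
          mul_le_mul_of_nonneg_left (hVup 0) hPnn
      _ ≤ Real.exp (-η * ((n + 1) * Δt)) *
            (β * ∑ j ∈ Finset.Icc (0:ℤ) ((J:ℤ)-1), ∑ i, (W 0 j i)^2) :=
          mul_le_mul_of_nonneg_right hE hβS0
  refine (mul_le_mul_iff_right₀ hζ).mp ?_
  calc ζ * (Δx * ∑ j ∈ Finset.Icc (0:ℤ) ((J:ℤ)-1), ∑ i, (W (n+1) j i)^2)
      = Δx * (ζ * ∑ j ∈ Finset.Icc (0:ℤ) ((J:ℤ)-1), ∑ i, (W (n+1) j i)^2) := by ring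
    _ ≤ Δx * (∑ j ∈ Finset.Icc (0:ℤ) ((J:ℤ)-1), quadF (Pp j) (Pm j) (W (n+1) j)) :=
        mul_le_mul_of_nonneg_left (hVlow (n+1)) hΔx.le
    _ ≤ Δx * ((1 - η*Δt)^(n+1) *
          (∑ j ∈ Finset.Icc (0:ℤ) ((J:ℤ)-1), quadF (Pp j) (Pm j) (W 0 j))
        + (ν * (1+1/ξ) / (η*Δx)) *
          ((Finset.range (n+1)).sup' Finset.nonempty_range_add_one (fun s => ∑ i, (b s i)^2))) :=
        mul_le_mul_of_nonneg_left hfin hΔx.le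
    _ ≤ Δx * (Real.exp (-η * ((n + 1) * Δt)) *
          (β * ∑ j ∈ Finset.Icc (0:ℤ) ((J:ℤ)-1), ∑ i, (W 0 j i)^2)
        + (ν * (1+1/ξ) / (η*Δx)) *
          ((Finset.range (n+1)).sup' Finset.nonempty_range_add_one (fun s => ∑ i, (b s i)^2))) :=
        mul_le_mul_of_nonneg_left (add_le_add_left hPV _) hΔx.le
    _ = ζ * ((β / ζ) * Real.exp (-η * ((n + 1) * Δt)) *
          (Δx * ∑ j ∈ Finset.Icc (0:ℤ) ((J:ℤ)-1), ∑ i, (W 0 j i)^2)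
        + (ν / (ζ * η)) * (1 + 1/ξ) *
          ((Finset.range (n+1)).sup' Finset.nonempty_range_add_one (fun s => ∑ i, (b s i)^2))) := by
        have hfield : ∀ S D' : ℝ,
            Δx * (Real.exp (-η * ((n + 1) * Δt)) * (β * S) + (ν * (1+1/ξ) / (η*Δx)) * D')
              = ζ * ((β / ζ) * Real.exp (-η * ((n + 1) * Δt)) * (Δx * S)
                  + (ν / (ζ * η)) * (1 + 1/ξ) * D') := by
          intro S D'
          field_simp
        exact hfield _ _
end

section
/- Let λ₁ > 0, λ₂ < 0, p₁ > 0, p₂ > 0, μ > 0, Δx > 0, and for j ∈ ℤ set xⱼ = (j + 1/2)·Δx. Define the 2×2 diagonal weight matrices Pⱼ = diag(p₁·e^{−μ·xⱼ}, p₂·e^{μ·xⱼ}) and the 2×2 diagonal matrices Θⱼ = diag( −λ₁·(p₁·e^{−μ·x_{j+1}} − p₁·e^{−μ·xⱼ})/Δx , |λ₂|·(p₂·e^{μ·xⱼ} − p₂·e^{μ·x_{j−1}})/Δx ). Then for every j and every v ∈ ℝ², vᵀΘⱼv ≥ η·vᵀPⱼv, where η = min(λ₁, |λ₂|)·(1 −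 e^{−μ·Δx})/Δx; in particular each Θⱼ is positive definite. -/
open Matrix

theorem exponential_weights_dissipativity (l₁ l₂ p₁ p₂ μ Δx : ℝ)
    (hl₁ : 0 < l₁) (hl₂ : l₂ < 0) (hp₁ : 0 < p₁) (hp₂ : 0 < p₂)
    (hμ : 0 < μ) (hΔx : 0 < Δx)
    (x : ℤ → ℝ) (hx : ∀ j : ℤ, x j = ((j : ℝ) + 1 / 2) * Δx)
    (P Θ : ℤ → Matrix (Fin 2) (Fin 2) ℝ)
    (hP : ∀ j : ℤ, P j =
      Matrix.diagonal ![p₁ * Real.exp (-(μ * x j)), p₂ * Real.exp (μ * x j)])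
    (hΘ : ∀ j : ℤ, Θ j = Matrix.diagonal
      ![-l₁ * (p₁ * Real.exp (-(μ * x (j + 1))) - p₁ * Real.exp (-(μ * x j))) / Δx,
        |l₂| * (p₂ * Real.exp (μ * x j) - p₂ * Real.exp (μ * x (j - 1))) / Δx])
    (η : ℝ) (hηdef : η = min l₁ |l₂| * ((1 - Real.exp (-(μ * Δx))) / Δx)) :
    (∀ j : ℤ, ∀ v : Fin 2 → ℝ, η * (v ⬝ᵥ (P j *ᵥ v)) ≤ v ⬝ᵥ (Θ j *ᵥ v)) ∧
      (∀ j : ℤ, ∀ v : Fin 2 → ℝ, v ≠ 0 → 0 < v ⬝ᵥ (Θ j *ᵥ v)) := by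
  have hl₂' : 0 < |l₂| := abs_pos.mpr (ne_of_lt hl₂)
  have he : Real.exp (-(μ * Δx)) < 1 := by
    rw [Real.exp_lt_one_iff]; nlinarith
  set e := Real.exp (-(μ * Δx)) with hedef
  have hd : 0 < (1 - e) / Δx := div_pos (by linarith) hΔx
  have hmin0 : 0 < min l₁ |l₂| := lt_min hl₁ hl₂'
  have hmin1 : min l₁ |l₂| ≤ l₁ := min_le_left _ _
  have hmin2 : min l₁ |l₂| ≤ |l₂| := min_le_right _ _
  have key : ∀ j : ℤ,
      (η * (p₁ * Real.exp (-(μ * x j))) ≤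
        -l₁ * (p₁ * Real.exp (-(μ * x (j + 1))) - p₁ * Real.exp (-(μ * x j))) / Δx ∧
       0 < -l₁ * (p₁ * Real.exp (-(μ * x (j + 1))) - p₁ * Real.exp (-(μ * x j))) / Δx) ∧
      (η * (p₂ * Real.exp (μ * x j)) ≤
        |l₂| * (p₂ * Real.exp (μ * x j) - p₂ * Real.exp (μ * x (j - 1))) / Δx ∧
       0 < |l₂| * (p₂ * Real.exp (μ * x j) - p₂ * Real.exp (μ * x (j - 1))) / Δx) := by
    intro j
    have hx1 : x (j + 1) = x j + Δx := by rw [hx, hx]; push_cast; ring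
    have hx2 : x (j - 1) = x j - Δx := by rw [hx, hx]; push_cast; ring
    have e0 : Real.exp (-(μ * x (j + 1))) = Real.exp (-(μ * x j)) * e := by
      rw [hx1, hedef, ← Real.exp_add]; ring_nf
    have e1 : Real.exp (μ * x (j - 1)) = Real.exp (μ * x j) * e := by
      rw [hx2, hedef, ← Real.exp_add]; ring_nf
    have hE0 := Real.exp_pos (-(μ * x j))
    have hE1 := Real.exp_pos (μ * x j)
    have r0 : -l₁ * (p₁ * Real.exp (-(μ * x (j + 1))) - p₁ * Real.exp (-(μ * x j))) / Δx
        = l₁ * p₁ * Real.exp (-(μ * x j)) * ((1 - e) / Δx) := by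
      rw [e0]; field_simp; ring
    have r1 : |l₂| * (p₂ * Real.exp (μ * x j) - p₂ * Real.exp (μ * x (j - 1))) / Δx
        = |l₂| * p₂ * Real.exp (μ * x j) * ((1 - e) / Δx) := by
      rw [e1]; field_simp
    rw [r0, r1, hηdef]
    refine ⟨⟨?_, by positivity⟩, ?_, by positivity⟩
    · nlinarith [mul_pos (mul_pos hp₁ hE0) hd]
    · nlinarith [mul_pos (mul_pos hp₂ hE1) hd]
  constructor
  · intro j v
    obtain ⟨⟨h0, _⟩, h1, _⟩ := key j
    rw [hP, hΘ]
    simp only [dotProduct, Matrix.mulVec_diagonal, Fin.sum_univ_two,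
      Matrix.cons_val_zero, Matrix.cons_val_one, Matrix.head_cons]
    nlinarith [sq_nonneg (v 0), sq_nonneg (v 1)]
  · intro j v hv
    obtain ⟨⟨_, h0⟩, _, h1⟩ := key j
    have hv' : v 0 ≠ 0 ∨ v 1 ≠ 0 := by
      by_contra h; push_neg at h
      exact hv (funext fun i => by fin_cases i <;> simp [h.1, h.2])
    rw [hΘ]
    simp only [dotProduct, Matrix.mulVec_diagonal, Fin.sum_univ_two,
      Matrix.cons_val_zero, Matrix.cons_val_one, Matrix.head_cons]
    rcases hv' with h | h
    · nlinarith [sq_nonneg (v 1), mul_pos h0 (mul_pos (abs_pos.mpr h) (abs_pos.mpr h)), sq_abs (v 0)]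
    · nlinarith [sq_nonneg (v 0), mul_pos h1 (mul_pos (abs_pos.mpr h) (abs_pos.mpr h)), sq_abs (v 1)]
end
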